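/- For every integer k ≥ 2, let G_k be the graph on three pairwise disjoint independent sets S₁, S₂, S₃, each of size k, obtained by adding all edges between S₁ and S₂, a perfect matching between S₁ and S₃, and the complement of a perfect matching between S₂ and S₃ (i.e. each vertex of S₂ is adjacent to all but one vertex of S₃, with these non-neighbors forming a perfect matching). Then in any lid-coloring of G_k all vertices of S₂ receive pairwise distinct colors, and consequently χ_lid(G_k) ≥ k + 2. -/
import Mathlib


open SimpleGraph

/-- The closed neighborhood `N[v]` of a vertex `v` in a simple graph `G`. -/
def closedNbhd {V : Type*} (G : SimpleGraph V) (v : V) : Set V :=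
  insert v (G.neighborSet v)

/-- A locally identifying coloring (lid-coloring): a proper vertex-coloring such that any
two adjacent vertices with distinct closed neighborhoods receive distinct sets of colors
on their closed neighborhoods. -/
def IsLidColoring {V α : Type*} (G : SimpleGraph V) (c : V → α) : Prop :=
  (∀ ⦃u v : V⦄, G.Adj u v → c u ≠ c v) ∧
  (∀ ⦃u v : V⦄, G.Adj u v → closedNbhd G u ≠ closedNbhd G v →
    c '' closedNbhd G u ≠ c '' closedNbhd G v)

/-- `G` is `k`-lid-colorable: it admits a lid-coloring using at most `k` colors. -/
def LidColorable {V : Type*} (G : SimpleGraph V) (k : ℕ) : Prop :=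
  ∃ c : V → Fin k, IsLidColoring G c

/-- `G` is bipartite: its vertex set splits into two parts such that every edge
joins the two parts. -/
def IsBipartite {V : Type*} (G : SimpleGraph V) : Prop :=
  ∃ U : Set V, ∀ ⦃u v : V⦄, G.Adj u v → (u ∈ U ↔ v ∉ U)

/-- The perfect graph `G_k` on three independent sets `S₁ = Sum.inl`,
`S₂ = Sum.inr ∘ Sum.inl`, `S₃ = Sum.inr ∘ Sum.inr`, each a copy of `Fin k`, with all edges
between `S₁` and `S₂`, a perfect matching between `S₁` and `S₃`, and the complement of a
perfect matching between `S₂` and `S₃`. -/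
def tripartiteExample (k : ℕ) : SimpleGraph (Fin k ⊕ (Fin k ⊕ Fin k)) :=
  SimpleGraph.fromRel (fun a b =>
    match a, b with
    | Sum.inl _, Sum.inr (Sum.inl _) => True
    | Sum.inl i, Sum.inr (Sum.inr j) => i = j
    | Sum.inr (Sum.inl i), Sum.inr (Sum.inr j) => i ≠ j
    | _, _ => False)

lemma mem_closedNbhd' {V : Type*} (G : SimpleGraph V) (v x : V) :
    x ∈ closedNbhd G v ↔ x = v ∨ G.Adj v x := by
  simp [closedNbhd, Set.mem_insert_iff, mem_neighborSet]

lemma nbhd_v (k : ℕ) (i : Fin k) (x : Fin k ⊕ (Fin k ⊕ Fin k)) :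
    x ∈ closedNbhd (tripartiteExample k) (Sum.inl i) ↔
      x = Sum.inl i ∨ (∃ m, x = Sum.inr (Sum.inl m)) ∨ x = Sum.inr (Sum.inr i) := by
  rw [mem_closedNbhd']
  rcases x with a | (a | a) <;> simp [tripartiteExample] <;> aesop

lemma nbhd_w (k : ℕ) (i : Fin k) (x : Fin k ⊕ (Fin k ⊕ Fin k)) :
    x ∈ closedNbhd (tripartiteExample k) (Sum.inr (Sum.inr i)) ↔
      x = Sum.inl i ∨ (∃ m, m ≠ i ∧ x = Sum.inr (Sum.inl m)) ∨ x = Sum.inr (Sum.inr i) := by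
  rw [mem_closedNbhd']
  rcases x with a | (a | a) <;> simp [tripartiteExample] <;> aesop

/-- For every `k ≥ 2`, in any lid-coloring of `G_k` the vertices of `S₂` receive pairwise
distinct colors, and consequently at least `k + 2` colors are used. -/
theorem stmt15 (k : ℕ) (hk : 2 ≤ k) {α : Type*} (c : Fin k ⊕ (Fin k ⊕ Fin k) → α)
    (hc : IsLidColoring (tripartiteExample k) c) :
    (Function.Injective fun i : Fin k => c (Sum.inr (Sum.inl i))) ∧
    k + 2 ≤ (Set.range c).ncard := by
  classical
  have hkpos : 0 < k := by omega
  -- key lemma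
  have key : ∀ j : Fin k,
      c (Sum.inr (Sum.inl j)) ∈ c '' closedNbhd (tripartiteExample k) (Sum.inr (Sum.inr j)) →
      False := by
    intro j hmem
    have hadj : (tripartiteExample k).Adj (Sum.inl j) (Sum.inr (Sum.inr j)) := by
      simp [tripartiteExample]
    have hujv : (Sum.inr (Sum.inl j) : Fin k ⊕ (Fin k ⊕ Fin k)) ∈
        closedNbhd (tripartiteExample k) (Sum.inl j) := by
      rw [nbhd_v]; exact Or.inr (Or.inl ⟨j, rfl⟩)
    have hujw : (Sum.inr (Sum.inl j) : Fin k ⊕ (Fin k ⊕ Fin k)) ∉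
        closedNbhd (tripartiteExample k) (Sum.inr (Sum.inr j)) := by
      rw [nbhd_w]; rintro (h | ⟨m, hm, h⟩ | h) <;> simp_all
    have hne : closedNbhd (tripartiteExample k) (Sum.inl j) ≠
        closedNbhd (tripartiteExample k) (Sum.inr (Sum.inr j)) := by
      intro h; rw [h] at hujv; exact hujw hujv
    apply hc.2 hadj hne
    apply Set.Subset.antisymm
    · rintro a ⟨x, hx, rfl⟩
      rw [nbhd_v] at hx
      rcases hx with rfl | ⟨m, rfl⟩ | rfl
      · exact ⟨Sum.inl j, (nbhd_w k j _).2 (Or.inl rfl), rfl⟩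
      · by_cases hm : m = j
        · subst hm; exact hmem
        · exact ⟨Sum.inr (Sum.inl m), (nbhd_w k j _).2 (Or.inr (Or.inl ⟨m, hm, rfl⟩)), rfl⟩
      · exact ⟨Sum.inr (Sum.inr j), (nbhd_w k j _).2 (Or.inr (Or.inr rfl)), rfl⟩
    · apply Set.image_mono
      intro x hx
      rw [nbhd_w] at hx; rw [nbhd_v]
      rcases hx with rfl | ⟨m, _, rfl⟩ | rfl
      · exact Or.inl rfl
      · exact Or.inr (Or.inl ⟨m, rfl⟩)
      · exact Or.inr (Or.inr rfl)
  -- injectivity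
  have hinj : Function.Injective fun i : Fin k => c (Sum.inr (Sum.inl i)) := by
    intro i j h
    by_contra hij
    apply key j
    exact ⟨Sum.inr (Sum.inl i), (nbhd_w k j _).2 (Or.inr (Or.inl ⟨i, hij, rfl⟩)), h⟩
  refine ⟨hinj, ?_⟩
  -- proper coloring facts
  have hvu : ∀ i m : Fin k, c (Sum.inl i) ≠ c (Sum.inr (Sum.inl m)) := by
    intro i m; exact hc.1 (by simp [tripartiteExample])
  have hwu : ∀ i m : Fin k, i ≠ m → c (Sum.inr (Sum.inr i)) ≠ c (Sum.inr (Sum.inl m)) := by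
    intro i m him
    have : (tripartiteExample k).Adj (Sum.inr (Sum.inl m)) (Sum.inr (Sum.inr i)) := by
      simp [tripartiteExample]; exact fun h => him h.symm
    exact (hc.1 this).symm
  have hvw : ∀ i : Fin k, c (Sum.inl i) ≠ c (Sum.inr (Sum.inr i)) := by
    intro i; exact hc.1 (by simp [tripartiteExample])
  set B : Finset α := Finset.image (fun i : Fin k => c (Sum.inr (Sum.inl i))) Finset.univ with hBdef
  have hBcard : B.card = k := by
    rw [hBdef, Finset.card_image_of_injective _ hinj, Finset.card_univ, Fintype.card_fin]
  have hBrange : (B : Set α) ⊆ Set.range c := by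
    intro a ha
    rw [hBdef] at ha; simp only [Finset.coe_image, Set.mem_image] at ha
    obtain ⟨i, _, rfl⟩ := ha; exact ⟨_, rfl⟩
  suffices h : ∃ x y : α, x ∈ Set.range c ∧ y ∈ Set.range c ∧ x ≠ y ∧ x ∉ B ∧ y ∉ B by
    obtain ⟨x, y, hx, hy, hxy, hxB, hyB⟩ := h
    have hcard : (insert x (insert y B)).card = k + 2 := by
      rw [Finset.card_insert_of_notMem (by simp [hxy, hxB]),
        Finset.card_insert_of_notMem hyB, hBcard]
    calc k + 2 = ((insert x (insert y B) : Finset α) : Set α).ncard := by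
          rw [Set.ncard_coe_finset, hcard]
      _ ≤ (Set.range c).ncard := by
          apply Set.ncard_le_ncard _ (Set.finite_range c)
          intro a ha
          simp only [Finset.coe_insert, Set.mem_insert_iff] at ha
          rcases ha with rfl | rfl | ha
          · exact hx
          · exact hy
          · exact hBrange ha
  have hmemB : ∀ a : α, a ∈ B ↔ ∃ m : Fin k, c (Sum.inr (Sum.inl m)) = a := by
    intro a; rw [hBdef]; simp
  by_cases hA : ∃ i j : Fin k, c (Sum.inl i) ≠ c (Sum.inl j)
  · obtain ⟨i, j, hij⟩ := hA
    refine ⟨c (Sum.inl i), c (Sum.inl j), ⟨_, rfl⟩, ⟨_, rfl⟩, hij, ?_, ?_⟩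
    · rw [hmemB]; rintro ⟨m, hm⟩; exact hvu i m hm.symm
    · rw [hmemB]; rintro ⟨m, hm⟩; exact hvu j m hm.symm
  · push_neg at hA
    by_cases hD : ∃ j : Fin k, c (Sum.inr (Sum.inr j)) ∉ B
    · obtain ⟨j, hj⟩ := hD
      refine ⟨c (Sum.inl j), c (Sum.inr (Sum.inr j)), ⟨_, rfl⟩, ⟨_, rfl⟩, hvw j, ?_, hj⟩
      rw [hmemB]; rintro ⟨m, hm⟩; exact hvu j m hm.symm
    · exfalso
      push_neg at hD
      have hj0 := hD ⟨0, hkpos⟩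
      rw [hmemB] at hj0
      obtain ⟨m, hm⟩ := hj0
      have hmj : m = ⟨0, hkpos⟩ := by
        by_contra hne
        exact hwu ⟨0, hkpos⟩ m (Ne.symm hne) hm.symm
      rw [hmj] at hm
      apply key ⟨0, hkpos⟩
      exact ⟨Sum.inr (Sum.inr ⟨0, hkpos⟩),
        (nbhd_w k ⟨0, hkpos⟩ _).2 (Or.inr (Or.inr rfl)), hm.symm⟩
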